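/- For jointly distributed random variables (X,Y) and any measurable critic function f, the InfoNCE bound holds: given N i.i.d. pairs (X_i, Y_i), the mutual information satisfies I(X;Y) ≥ log N − L, where L = −E[log( e^{f(X_1,Y_1)} / Σ_{k=1}^N e^{f(X_1,Y_k)} )]. -/

import Mathlib

open Real Finset

/-!
Only `X_1` and `Y_1, …, Y_N` enter the loss. Their joint law `W` differs from the law `Q` that
makes `X_1` independent of the `Y`'s only by the factor `p(x, y_1) / (p(x) p(y_1))`, so
`KL(W ‖ Q) = I(X;Y)`. Gibbs' inequality in Donsker–Varadhan form, applied to the softmax weight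
`R` of `Y_1`, gives `E_W[log R] ≤ KL(W ‖ Q) + log E_Q[R]`; under `Q` the `Y`'s are i.i.d. and
independent of `X_1`, hence exchangeable, so `E_Q[R] = 1 / N`.
-/

theorem sum_pi_prod_mul_apply {ι γ R : Type*} [Fintype ι] [DecidableEq ι] [Fintype γ]
    [CommSemiring R] (w : ι → γ → R) (i : ι) (H : γ → R) :
    ∑ y : ι → γ, (∏ k, w k (y k)) * H (y i) =
      (∑ c, w i c * H c) * ∏ k ∈ univ.erase i, ∑ c, w k c := by
  have hupdate : ∀ y : ι → γ, (∏ k, w k (y k)) * H (y i) =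
      ∏ k, Function.update w i (fun c => w i c * H c) k (y k) := by
    intro y
    rw [← mul_prod_erase _ _ (mem_univ i), ← mul_prod_erase _ _ (mem_univ i),
      Function.update_self, mul_right_comm]
    congr 1
    exact prod_congr rfl fun k hk => by rw [Function.update_of_ne (ne_of_mem_erase hk)]
  simp_rw [hupdate, ← Fintype.prod_sum, ← mul_prod_erase _ _ (mem_univ i), Function.update_self]
  congr 1
  exact prod_congr rfl fun k hk => by rw [Function.update_of_ne (ne_of_mem_erase hk)]

theorem sum_pi_prod_mul_apply_of_sum_eq_one {ι γ R : Type*} [Fintype ι] [DecidableEq ι]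
    [Fintype γ] [CommSemiring R] (w : γ → R) (hw : ∑ c, w c = 1) (i : ι) (H : γ → R) :
    ∑ y : ι → γ, (∏ k, w (y k)) * H (y i) = ∑ c, w c * H c := by
  simp [sum_pi_prod_mul_apply (fun _ => w) i H, hw]

/-- Summing out the first components of all samples but the `i`-th one. -/
theorem sum_pi_prod_mul_fst_apply_snd {ι α β R : Type*} [Fintype ι] [DecidableEq ι]
    [Fintype α] [Fintype β] [CommSemiring R] (p : α × β → R) (i : ι)
    (G : α × (ι → β) → R) :
    ∑ s : ι → α × β, (∏ k, p (s k)) * G ((s i).1, fun k => (s k).2) =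
      ∑ z : α × (ι → β), (p (z.1, z.2 i) * ∏ k ∈ univ.erase i, ∑ a, p (a, z.2 k)) * G z := by
  rw [Fintype.sum_equiv (Equiv.arrowProdEquivProdArrow ι (fun _ => α) (fun _ => β))
      (fun s => (∏ k, p (s k)) * G ((s i).1, fun k => (s k).2))
      (fun uv => (∏ k, p (uv.1 k, uv.2 k)) * G (uv.1 i, uv.2)) fun s => rfl,
    Fintype.sum_prod_type_right, Fintype.sum_prod_type_right]
  refine sum_congr rfl fun y _ => ?_
  rw [sum_pi_prod_mul_apply (fun k a => p (a, y k)) i (fun a => G (a, y)), sum_mul]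
  exact sum_congr rfl fun x _ => by ring

/-- By exchangeability the `card ι` softmax weights have the same expectation, and they sum
to `1`. -/
theorem sum_pi_prod_mul_div_sum_eq_inv_card {ι γ : Type*} [Fintype ι] [DecidableEq ι]
    [Fintype γ] (q : γ → ℝ) (hq : ∑ c, q c = 1) (φ : γ → ℝ) (hφ : ∀ c, 0 < φ c) (i : ι) :
    ∑ y : ι → γ, (∏ k, q (y k)) * (φ (y i) / ∑ k, φ (y k)) = (Fintype.card ι : ℝ)⁻¹ := by
  set F : ι → ℝ := fun j => ∑ y : ι → γ, (∏ k, q (y k)) * (φ (y j) / ∑ k, φ (y k))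
  have hswap : ∀ j, F j = F i := by
    intro j
    refine (Equiv.sum_comp ((Equiv.swap i j).arrowCongr (Equiv.refl γ)) _).symm.trans ?_
    refine sum_congr rfl fun y _ => ?_
    simp only [Equiv.arrowCongr_apply, Equiv.symm_swap, Equiv.coe_refl, Function.comp_apply, id]
    rw [Equiv.prod_comp (Equiv.swap i j) fun k => q (y k),
      Equiv.sum_comp (Equiv.swap i j) fun k => φ (y k), Equiv.swap_apply_right]
  have htotal : ∑ j, F j = 1 := by
    have hφ_sum : ∀ y : ι → γ, 0 < ∑ k, φ (y k) :=
      fun y => sum_pos (fun k _ => hφ _) ⟨i, mem_univ i⟩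
    simp only [F]
    rw [sum_comm]
    simp_rw [← mul_sum, ← sum_div, fun y => div_self (hφ_sum y).ne', mul_one, ← Fintype.prod_sum,
      hq, prod_const_one]
  rw [sum_congr rfl fun j _ => hswap j, sum_const, card_univ, nsmul_eq_mul] at htotal
  exact eq_inv_of_mul_eq_one_right htotal

theorem mul_log_le_mul_log_div_add_sub {w q r : ℝ} (hw : 0 ≤ w) (hq : 0 < q) (hr : 0 < r) :
    w * log r ≤ w * log (w / q) + (q * r - w) := by
  rcases hw.eq_or_lt with rfl | hw
  · simpa using (mul_pos hq hr).le
  have hsplit : log r = log (w / q) + log (q * r / w) := by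
    rw [← log_mul (by positivity) (by positivity)]
    congr 1
    field_simp
  have hlog : w * log (q * r / w) ≤ q * r - w := by
    calc w * log (q * r / w) ≤ w * (q * r / w - 1) :=
          mul_le_mul_of_nonneg_left (log_le_sub_one_of_pos (by positivity)) hw.le
      _ = q * r - w := by field_simp
  rw [hsplit, mul_add]
  linarith

theorem sum_mul_log_le_sum_mul_log_div {ι : Type*} [Fintype ι] {W Q R : ι → ℝ}
    (hW : ∀ i, 0 ≤ W i) (hQ : ∀ i, 0 < Q i) (hR : ∀ i, 0 < R i)
    (hQR : ∑ i, Q i * R i ≤ ∑ i, W i) :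
    ∑ i, W i * log (R i) ≤ ∑ i, W i * log (W i / Q i) := by
  calc ∑ i, W i * log (R i) ≤ ∑ i, (W i * log (W i / Q i) + (Q i * R i - W i)) :=
        sum_le_sum fun i _ => mul_log_le_mul_log_div_add_sub (hW i) (hQ i) (hR i)
    _ ≤ ∑ i, W i * log (W i / Q i) := by
        rw [sum_add_distrib, sum_sub_distrib]
        linarith

theorem sum_mul_log_le_sum_mul_log_div_add_log_sum {ι : Type*} [Fintype ι] {W Q R : ι → ℝ}
    (hW : ∀ i, 0 ≤ W i) (hW_sum : ∑ i, W i = 1) (hQ : ∀ i, 0 < Q i) (hR : ∀ i, 0 < R i) :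
    ∑ i, W i * log (R i) ≤ ∑ i, W i * log (W i / Q i) + log (∑ i, Q i * R i) := by
  obtain ⟨j, -⟩ := nonempty_of_sum_ne_zero (hW_sum.symm ▸ one_ne_zero : ∑ i, W i ≠ 0)
  have hc : 0 < ∑ i, Q i * R i := sum_pos (fun i _ => mul_pos (hQ i) (hR i)) ⟨j, mem_univ j⟩
  have h := sum_mul_log_le_sum_mul_log_div hW hQ (R := fun i => R i / ∑ i, Q i * R i)
    (fun i => div_pos (hR i) hc)
    (by simp only [mul_div_assoc', ← sum_div, div_self hc.ne', hW_sum, le_refl])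
  simp_rw [log_div (hR _).ne' hc.ne', mul_sub, sum_sub_distrib, ← sum_mul, hW_sum] at h
  linarith

/-- InfoNCE bound (discrete setting): for a joint distribution `p` on `α × β` with
marginals `pX`, `pY`, any critic `f`, and `N` i.i.d. samples, the mutual information
`I(X;Y)` is at least `log N - L` where `L` is the InfoNCE loss. -/
theorem infoNCE_mutual_information_bound
    {α β : Type*} [Fintype α] [Fintype β]
    (N : ℕ) (hN : 0 < N)
    (p : α × β → ℝ) (hp : ∀ x, 0 < p x) (hsum : ∑ x, p x = 1)
    (f : α → β → ℝ)
    (pX : α → ℝ) (hpX : ∀ a, pX a = ∑ b, p (a, b))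
    (pY : β → ℝ) (hpY : ∀ b, pY b = ∑ a, p (a, b))
    (I : ℝ)
    (hI : I = ∑ a, ∑ b, p (a, b) * Real.log (p (a, b) / (pX a * pY b)))
    (L : ℝ)
    (hL : L = -∑ s : Fin N → α × β,
        (∏ k, p (s k)) *
          Real.log (Real.exp (f (s ⟨0, hN⟩).1 (s ⟨0, hN⟩).2) /
            ∑ k, Real.exp (f (s ⟨0, hN⟩).1 (s k).2))) :
    I ≥ Real.log N - L := by
  set i : Fin N := ⟨0, hN⟩
  obtain ⟨⟨a₀, b₀⟩, -⟩ := nonempty_of_sum_ne_zero (hsum.symm ▸ one_ne_zero : ∑ z, p z ≠ 0)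
  have hpX_pos : ∀ a, 0 < pX a := fun a => hpX a ▸ sum_pos (fun b _ => hp _) ⟨b₀, mem_univ _⟩
  have hpY_pos : ∀ b, 0 < pY b := fun b => hpY b ▸ sum_pos (fun a _ => hp _) ⟨a₀, mem_univ _⟩
  have hpX_sum : ∑ a, pX a = 1 := by simp_rw [hpX, ← Fintype.sum_prod_type, hsum]
  have hpY_sum : ∑ b, pY b = 1 := by simp_rw [hpY, ← Fintype.sum_prod_type_right, hsum]
  -- `W` is the law of `(X_i, (Y_k)_k)`, `Q` the law making `X_i` independent of the `Y_k`.
  set W : α × (Fin N → β) → ℝ := fun z => p (z.1, z.2 i) * ∏ k ∈ univ.erase i, pY (z.2 k)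
  set Q : α × (Fin N → β) → ℝ := fun z => pX z.1 * ∏ k, pY (z.2 k)
  set R : α × (Fin N → β) → ℝ := fun z => exp (f z.1 (z.2 i)) / ∑ k, exp (f z.1 (z.2 k))
  have hsample : ∀ G : α × (Fin N → β) → ℝ,
      ∑ s : Fin N → α × β, (∏ k, p (s k)) * G ((s i).1, fun k => (s k).2) =
      ∑ z, W z * G z := fun G => by simp_rw [sum_pi_prod_mul_fst_apply_snd p i G, W, hpY]
  have hW_pair : ∀ H : α × β → ℝ, ∑ z, W z * H (z.1, z.2 i) = ∑ z, p z * H z := fun H => by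
    rw [← hsample, sum_pi_prod_mul_apply_of_sum_eq_one p hsum i H]
  have hW_div_Q : ∀ z, W z / Q z = p (z.1, z.2 i) / (pX z.1 * pY (z.2 i)) := fun z => by
    simp only [W, Q]
    rw [← mul_prod_erase univ _ (mem_univ i), ← mul_assoc,
      mul_div_mul_right _ _ (prod_pos fun k _ => hpY_pos _).ne']
  have hQR : ∑ z, Q z * R z = (N : ℝ)⁻¹ := by
    simp_rw [Fintype.sum_prod_type, Q, R, mul_assoc, ← mul_sum,
      sum_pi_prod_mul_div_sum_eq_inv_card pY hpY_sum _ (fun _ => exp_pos _) i, ← sum_mul, hpX_sum,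
      one_mul, Fintype.card_fin]
  have hgibbs := sum_mul_log_le_sum_mul_log_div_add_log_sum (W := W) (Q := Q) (R := R)
    (fun z => mul_nonneg (hp _).le (prod_nonneg fun k _ => (hpY_pos _).le))
    (by simpa [hsum] using hW_pair fun _ => 1)
    (fun z => mul_pos (hpX_pos _) (prod_pos fun k _ => hpY_pos _))
    (fun z => div_pos (exp_pos _) (sum_pos (fun k _ => exp_pos _) ⟨i, mem_univ i⟩))
  rw [hQR, log_inv, ← hsample fun z => log (R z)] at hgibbs
  simp_rw [hW_div_Q, hW_pair fun z => log (p z / (pX z.1 * pY z.2)),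
    Fintype.sum_prod_type] at hgibbs
  rw [hI, hL]
  linarith
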